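/- arXiv:2307.12694 — 5 statements merged into one kernel-verified Lean document; each statement's English description precedes it below -/
import Mathlib

section
/- Let I ⊆ ℝ be measurable with finite positive measure, f : I → ℝ^ℓ square-integrable with F = ∫_I f fᵀ dτ positive definite, X ∈ ℝ^{n×n} symmetric positive semidefinite, and x : I → ℝ^n square-integrable. Then ∫_I x(τ)ᵀ X x(τ) dτ ≥ vᵀ (F^{-1} ⊗ X) v, where v = ∫_I (f(τ) ⊗ I_n) x(τ) dτ ∈ ℝ^{ℓ n}. -/
/-!
The Gram matrix `[[F, V], [Vᵀ, W]]` of the square-integrable functions `(f, x)`, where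
`V = ∫ f xᵀ` and `W = ∫ x xᵀ`, is positive semidefinite, hence so is its Schur complement
`W - Vᵀ F⁻¹ V`. The trace of a product of two positive semidefinite matrices is nonnegative
(Schur product theorem), so `tr (X W) ≥ tr (X Vᵀ F⁻¹ V)`. The left side is `∫ xᵀ X x`, and since
`v = vec Vᵀ` the right side is `vᵀ (F⁻¹ ⊗ X) v`.
-/

open Matrix MeasureTheory
open scoped Kronecker ComplexOrder

theorem Matrix.PosSemidef.trace_mul_nonneg {𝕜 n : Type*} [RCLike 𝕜] [Fintype n]
    {A B : Matrix n n 𝕜} (hA : A.PosSemidef) (hB : B.PosSemidef) : 0 ≤ (A * B).trace := by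
  have h := (hA.hadamard hB.transpose).dotProduct_mulVec_nonneg (star fun _ => 1)
  convert h using 1
  simp [trace, mul_apply, dotProduct, mulVec, hadamard_apply]

theorem MeasureTheory.L2.real_inner_toLp_toLp {α : Type*} [MeasurableSpace α] {μ : Measure α}
    {f g : α → ℝ} (hf : MemLp f 2 μ) (hg : MemLp g 2 μ) :
    inner ℝ (hf.toLp f) (hg.toLp g) = ∫ a, f a * g a ∂μ := by
  rw [L2.inner_def]
  refine integral_congr_ae ?_
  filter_upwards [hf.coeFn_toLp, hg.coeFn_toLp] with a hfa hga
  simp [hfa, hga, mul_comm]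

namespace MeasureTheory

variable {α ι κ : Type*} [MeasurableSpace α] {μ : Measure α}

/-- The matrix `∫ u wᵀ dμ`, integrated entrywise (matrices carry no global norm). -/
noncomputable def integralVecMulVec (μ : Measure α) (u : α → ι → ℝ) (w : α → κ → ℝ) :
    Matrix ι κ ℝ :=
  of fun i j => ∫ a, u a i * w a j ∂μ

theorem transpose_integralVecMulVec (u : α → ι → ℝ) (w : α → κ → ℝ) :
    (integralVecMulVec μ u w)ᵀ = integralVecMulVec μ w u := by
  ext i j
  simp only [integralVecMulVec, transpose_apply, of_apply, mul_comm]

theorem integralVecMulVec_sumElim (u : α → ι → ℝ) (w : α → κ → ℝ) :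
    integralVecMulVec μ (fun a => Sum.elim (u a) (w a)) (fun a => Sum.elim (u a) (w a)) =
      fromBlocks (integralVecMulVec μ u u) (integralVecMulVec μ u w)
        (integralVecMulVec μ w u) (integralVecMulVec μ w w) := by
  ext (i | i) (j | j) <;> rfl

theorem posSemidef_integralVecMulVec [Fintype ι] {z : α → ι → ℝ}
    (hz : ∀ i, MemLp (fun a => z a i) 2 μ) : (integralVecMulVec μ z z).PosSemidef := by
  have hgram : integralVecMulVec μ z z = gram ℝ fun i => (hz i).toLp := by
    ext i j
    simp only [integralVecMulVec, gram, of_apply, L2.real_inner_toLp_toLp]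
  rw [hgram]
  exact posSemidef_gram ℝ _

theorem integral_dotProduct_mulVec [Fintype ι] [Fintype κ] {u : α → ι → ℝ} {w : α → κ → ℝ}
    (huw : ∀ i j, Integrable (fun a => u a i * w a j) μ) (M : Matrix ι κ ℝ) :
    ∫ a, u a ⬝ᵥ M *ᵥ w a ∂μ = (M * integralVecMulVec μ w u).trace := by
  have hterm : ∀ i j, Integrable (fun a => u a i * (M i j * w a j)) μ := fun i j => by
    simpa only [mul_left_comm] using (huw i j).const_mul (M i j)
  simp only [dotProduct, mulVec, Finset.mul_sum]
  rw [integral_finsetSum _ fun i _ => integrable_finsetSum _ fun j _ => hterm i j]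
  simp only [trace, diag, mul_apply, integralVecMulVec, of_apply]
  refine Finset.sum_congr rfl fun i _ => ?_
  rw [integral_finsetSum _ fun j _ => hterm i j]
  refine Finset.sum_congr rfl fun j _ => ?_
  rw [← integral_const_mul]
  congr 1 with a
  ring

theorem trace_mul_le_integral_dotProduct_mulVec [Fintype ι] [DecidableEq ι] [Fintype κ]
    {f : α → ι → ℝ} {x : α → κ → ℝ} (hf : ∀ i, MemLp (fun a => f a i) 2 μ)
    (hx : ∀ k, MemLp (fun a => x a k) 2 μ) (hF : (integralVecMulVec μ f f).PosDef)
    {X : Matrix κ κ ℝ} (hX : X.PosSemidef) :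
    (X * (integralVecMulVec μ x f * (integralVecMulVec μ f f)⁻¹ * integralVecMulVec μ f x)).trace
      ≤ ∫ a, x a ⬝ᵥ X *ᵥ x a ∂μ := by
  have : Invertible (integralVecMulVec μ f f) := hF.isUnit.invertible
  have hblock := posSemidef_integralVecMulVec (μ := μ) (z := fun a => Sum.elim (f a) (x a))
    (Sum.rec hf hx)
  rw [integralVecMulVec_sumElim, ← transpose_integralVecMulVec f x,
    ← conjTranspose_eq_transpose_of_trivial] at hblock
  have hschur := hX.trace_mul_nonneg ((PosDef.fromBlocks₁₁ _ _ hF).mp hblock)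
  rw [mul_sub, trace_sub, sub_nonneg, conjTranspose_eq_transpose_of_trivial,
    transpose_integralVecMulVec] at hschur
  rwa [integral_dotProduct_mulVec fun k l => (hx k).integrable_mul (hx l)]

end MeasureTheory

theorem stmt5_general (ℓ n : ℕ) (I : Set ℝ)
    (f : ℝ → Fin ℓ → ℝ) (x : ℝ → Fin n → ℝ)
    (hf : ∀ i, MemLp (fun τ => f τ i) 2 (volume.restrict I))
    (hx : ∀ k, MemLp (fun τ => x τ k) 2 (volume.restrict I))
    (F : Matrix (Fin ℓ) (Fin ℓ) ℝ)
    (hFdef : F = Matrix.of fun i j => ∫ τ in I, f τ i * f τ j)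
    (hFpd : F.PosDef)
    (X : Matrix (Fin n) (Fin n) ℝ) (hX : X.PosSemidef)
    (v : Fin ℓ × Fin n → ℝ)
    (hv : v = fun p => ∫ τ in I, f τ p.1 * x τ p.2) :
    (∫ τ in I, (x τ) ⬝ᵥ (X.mulVec (x τ))) ≥ v ⬝ᵥ ((F⁻¹ ⊗ₖ X).mulVec v) := by
  change F = integralVecMulVec _ f f at hFdef
  -- `vec` stacks columns: `vec A (i, k) = A k i`.
  change v = vec (integralVecMulVec (volume.restrict I) f x)ᵀ at hv
  subst hFdef hv
  have hFinv : (integralVecMulVec (volume.restrict I) f f)⁻¹ᵀ =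
      (integralVecMulVec (volume.restrict I) f f)⁻¹ := by
    rw [transpose_nonsing_inv, transpose_integralVecMulVec]
  rw [kronecker_mulVec_vec, vec_dotProduct_vec, hFinv, transpose_transpose,
    transpose_integralVecMulVec, trace_mul_comm, Matrix.mul_assoc, Matrix.mul_assoc,
    ← Matrix.mul_assoc _ _ (integralVecMulVec _ f x)]
  exact trace_mul_le_integral_dotProduct_mulVec hf hx hFpd hX

/-- Bessel-type integral inequality:
`∫_I xᵀ X x ≥ vᵀ (F⁻¹ ⊗ X) v` with `v = ∫_I (f ⊗ I_n) x`. -/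
theorem stmt5 (ℓ n : ℕ) (I : Set ℝ) (hI : MeasurableSet I)
    (h0 : 0 < volume I) (hfin : volume I < ⊤)
    (f : ℝ → Fin ℓ → ℝ) (x : ℝ → Fin n → ℝ)
    (hf : ∀ i, MemLp (fun τ => f τ i) 2 (volume.restrict I))
    (hx : ∀ k, MemLp (fun τ => x τ k) 2 (volume.restrict I))
    (F : Matrix (Fin ℓ) (Fin ℓ) ℝ)
    (hFdef : F = Matrix.of fun i j => ∫ τ in I, f τ i * f τ j)
    (hFpd : F.PosDef)
    (X : Matrix (Fin n) (Fin n) ℝ) (hX : X.PosSemidef)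
    (v : Fin ℓ × Fin n → ℝ)
    (hv : v = fun p => ∫ τ in I, f τ p.1 * x τ p.2) :
    (∫ τ in I, (x τ) ⬝ᵥ (X.mulVec (x τ))) ≥ v ⬝ᵥ ((F⁻¹ ⊗ₖ X).mulVec v) :=
  stmt5_general ℓ n I f x hf hx F hFdef hFpd X hX v hv
end

section
/- Let I ⊆ ℝ be measurable with finite positive measure, and suppose g : I → ℝ^λ and f : I → ℝ^ℓ are square-integrable with the stacked Gram matrix ∫_I [g;f][g;f]ᵀ dτ positive definite. Set F = ∫_I f fᵀ dτ, A = (∫_I g fᵀ dτ) F^{-1}, e(τ) = g(τ) − A f(τ), and E = ∫_I e eᵀ dτ. Then E is positive definite, and for any symmetric positive semidefinite X ∈ ℝ^{n×n} and square-integrable x : I → ℝ^n: ∫_I xᵀ X x dτ ≥ v₁ᵀ (F^{-1} ⊗ X) v₁ + v₂ᵀ (E^{-1} ⊗ X) v₂, where v₁ = ∫_I (f(τ) ⊗ I_n) x(τ) dτ and v₂ = ∫_I (e(τ) ⊗ I_n) x(τ) dτ. -/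
/-!
The stacked family `[e; f; x]` has a positive semidefinite Gram matrix. By the choice of `A`,
`e` is orthogonal to `f`, so the Gram matrix `D` of `[e; f]` is `diag(E, F)`; and
`[e; f] = T [g; f]` with `T = [[1, -A], [0, 1]]` invertible, so `D`, hence `E`, is positive
definite. The Schur complement of `D` is `S - V₂ᵀ E⁻¹ V₂ - V₁ᵀ F⁻¹ V₁ ⪰ 0`, where `S` is the
Gram matrix of `x` and `Vᵢ` the cross Gram matrices with `x`. Pairing it with `X` through
`trace (Xᵀ ·) ≥ 0` gives the inequality, since by `(M ⊗ X) vec V = vec (X V Mᵀ)` both sides are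
traces of this form.
-/

open Matrix MeasureTheory
open scoped Kronecker

namespace Matrix

open scoped ComplexOrder in
lemma PosSemidef.trace_mul_nonneg_s6 {𝕜 n : Type*} [RCLike 𝕜] [Fintype n] {A B : Matrix n n 𝕜}
    (hA : A.PosSemidef) (hB : B.PosSemidef) : 0 ≤ (A * B).trace := by
  classical
  open scoped MatrixOrder in
  obtain ⟨Y, rfl⟩ := CStarAlgebra.nonneg_iff_eq_star_mul_self.mp hA.nonneg
  rw [star_eq_conjTranspose, Matrix.mul_assoc, trace_mul_comm]
  exact (hB.mul_mul_conjTranspose_same Y).trace_nonneg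

lemma vec_dotProduct_kronecker_mulVec_vec {R l m : Type*} [CommRing R] [Fintype l] [Fintype m]
    (V : Matrix m l R) (M : Matrix l l R) (X : Matrix m m R) :
    vec V ⬝ᵥ ((M ⊗ₖ X) *ᵥ vec V) = (Xᵀ * (V * M * Vᵀ)).trace := by
  rw [kronecker_mulVec_vec, vec_dotProduct_vec, ← trace_transpose]
  simp only [transpose_mul, transpose_transpose, ← Matrix.mul_assoc]
  rw [Matrix.mul_assoc _ Xᵀ, trace_mul_comm, ← Matrix.mul_assoc]

lemma transpose_fromRows_mul_inv_fromBlocks_mul_fromRows {R l m n : Type*} [CommRing R]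
    [Fintype l] [Fintype m] [DecidableEq l] [DecidableEq m]
    {E : Matrix l l R} {F : Matrix m m R} (hE : IsUnit E) (hF : IsUnit F)
    (W₁ : Matrix l n R) (W₂ : Matrix m n R) :
    (fromRows W₁ W₂)ᵀ * (fromBlocks E 0 0 F)⁻¹ * fromRows W₁ W₂ =
      W₁ᵀ * E⁻¹ * W₁ + W₂ᵀ * F⁻¹ * W₂ := by
  rw [inv_fromBlocks_zero₂₁_of_isUnit_iff _ _ _ (iff_of_true hE hF), transpose_fromRows,
    fromCols_mul_fromBlocks, fromCols_mul_fromRows]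
  simp

end Matrix

namespace MeasureTheory

variable {α ι ι' κ κ' : Type*} [MeasurableSpace α] {μ : Measure α}

noncomputable def crossGram (μ : Measure α) (φ : α → ι → ℝ) (ψ : α → κ → ℝ) : Matrix ι κ ℝ :=
  of fun i j => ∫ τ, φ τ i * ψ τ j ∂μ

lemma memLp_mulVec [Fintype ι] {p : ENNReal} {φ : α → ι → ℝ}
    (hφ : ∀ i, MemLp (fun τ => φ τ i) p μ) (B : Matrix ι' ι ℝ) (i : ι') :
    MemLp (fun τ => (B *ᵥ φ τ) i) p μ :=
  memLp_finsetSum _ fun j _ => (hφ j).const_mul (B i j)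

lemma crossGram_transpose (φ : α → ι → ℝ) (ψ : α → κ → ℝ) :
    (crossGram μ φ ψ)ᵀ = crossGram μ ψ φ := by
  ext i j
  simp only [crossGram, transpose_apply, of_apply, mul_comm]

lemma crossGram_sub_left {φ φ' : α → ι → ℝ} {ψ : α → κ → ℝ}
    (hφ : ∀ i, MemLp (fun τ => φ τ i) 2 μ) (hφ' : ∀ i, MemLp (fun τ => φ' τ i) 2 μ)
    (hψ : ∀ j, MemLp (fun τ => ψ τ j) 2 μ) :
    crossGram μ (fun τ => φ τ - φ' τ) ψ = crossGram μ φ ψ - crossGram μ φ' ψ := by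
  ext i j
  simp only [crossGram, of_apply, Matrix.sub_apply, Pi.sub_apply, sub_mul]
  exact integral_sub ((hφ i).integrable_mul (hψ j)) ((hφ' i).integrable_mul (hψ j))

lemma crossGram_mulVec_left [Fintype ι] {φ : α → ι → ℝ} {ψ : α → κ → ℝ}
    (hφ : ∀ i, MemLp (fun τ => φ τ i) 2 μ) (hψ : ∀ j, MemLp (fun τ => ψ τ j) 2 μ)
    (B : Matrix ι' ι ℝ) :
    crossGram μ (fun τ => B *ᵥ φ τ) ψ = B * crossGram μ φ ψ := by
  ext i j
  simp only [crossGram, of_apply, mul_apply, mulVec, dotProduct, Finset.sum_mul, mul_assoc]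
  have hint (k : ι) : Integrable (fun τ => B i k * (φ τ k * ψ τ j)) μ :=
    ((hφ k).integrable_mul (hψ j)).const_mul _
  rw [integral_finsetSum _ fun k _ => hint k]
  simp_rw [integral_const_mul]

lemma crossGram_mulVec_right [Fintype κ] {φ : α → ι → ℝ} {ψ : α → κ → ℝ}
    (hφ : ∀ i, MemLp (fun τ => φ τ i) 2 μ) (hψ : ∀ j, MemLp (fun τ => ψ τ j) 2 μ)
    (C : Matrix κ' κ ℝ) :
    crossGram μ φ (fun τ => C *ᵥ ψ τ) = crossGram μ φ ψ * Cᵀ := by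
  rw [← crossGram_transpose, crossGram_mulVec_left hψ hφ, transpose_mul, crossGram_transpose]

lemma crossGram_mulVec_mulVec [Fintype ι] [Fintype κ] {φ : α → ι → ℝ} {ψ : α → κ → ℝ}
    (hφ : ∀ i, MemLp (fun τ => φ τ i) 2 μ) (hψ : ∀ j, MemLp (fun τ => ψ τ j) 2 μ)
    (B : Matrix ι' ι ℝ) (C : Matrix κ' κ ℝ) :
    crossGram μ (fun τ => B *ᵥ φ τ) (fun τ => C *ᵥ ψ τ) = B * crossGram μ φ ψ * Cᵀ := by
  rw [crossGram_mulVec_right (memLp_mulVec hφ B) hψ, crossGram_mulVec_left hφ hψ]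

lemma crossGram_sumElim {φ : α → ι → ℝ} {φ' : α → ι' → ℝ} {ψ : α → κ → ℝ}
    {ψ' : α → κ' → ℝ} :
    crossGram μ (fun τ => Sum.elim (φ τ) (φ' τ)) (fun τ => Sum.elim (ψ τ) (ψ' τ)) =
      fromBlocks (crossGram μ φ ψ) (crossGram μ φ ψ') (crossGram μ φ' ψ) (crossGram μ φ' ψ') := by
  ext (i | i) (j | j) <;> rfl

lemma crossGram_sumElim_left {φ : α → ι → ℝ} {φ' : α → ι' → ℝ} {ψ : α → κ → ℝ} :
    crossGram μ (fun τ => Sum.elim (φ τ) (φ' τ)) ψ =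
      fromRows (crossGram μ φ ψ) (crossGram μ φ' ψ) := by
  ext (i | i) j <;> rfl

lemma integral_dotProduct_eq_trace_crossGram [Fintype ι] {φ ψ : α → ι → ℝ}
    (hφ : ∀ i, MemLp (fun τ => φ τ i) 2 μ) (hψ : ∀ j, MemLp (fun τ => ψ τ j) 2 μ) :
    ∫ τ, φ τ ⬝ᵥ ψ τ ∂μ = (crossGram μ φ ψ).trace :=
  integral_finsetSum _ fun i _ => (hφ i).integrable_mul (hψ i)

lemma integral_dotProduct_mulVec_s6 [Fintype ι] {φ : α → ι → ℝ}
    (hφ : ∀ i, MemLp (fun τ => φ τ i) 2 μ) (M : Matrix ι ι ℝ) :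
    ∫ τ, φ τ ⬝ᵥ (M *ᵥ φ τ) ∂μ = (Mᵀ * crossGram μ φ φ).trace := by
  rw [integral_dotProduct_eq_trace_crossGram hφ (memLp_mulVec hφ M),
    crossGram_mulVec_right hφ hφ, trace_mul_comm]

lemma dotProduct_crossGram_mulVec_self [Fintype ι] {φ : α → ι → ℝ}
    (hφ : ∀ i, MemLp (fun τ => φ τ i) 2 μ) (v : ι → ℝ) :
    v ⬝ᵥ (crossGram μ φ φ *ᵥ v) = ∫ τ, (v ⬝ᵥ φ τ) ^ 2 ∂μ := by
  -- the left side is the `1 × 1` Gram matrix of the single function `v ⬝ᵥ φ`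
  have h := congrFun₂
    (crossGram_mulVec_mulVec hφ hφ (replicateRow Unit v) (replicateRow Unit v)) () ()
  rw [transpose_replicateRow, Matrix.mul_assoc, ← replicateCol_mulVec,
    replicateRow_mul_replicateCol_apply] at h
  simp only [← h, sq]
  rfl

lemma posSemidef_crossGram_self [Fintype ι] {φ : α → ι → ℝ}
    (hφ : ∀ i, MemLp (fun τ => φ τ i) 2 μ) : (crossGram μ φ φ).PosSemidef := by
  refine .of_dotProduct_mulVec_nonneg ?_ fun v => ?_
  · rw [IsHermitian, conjTranspose_eq_transpose_of_trivial, crossGram_transpose]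
  · rw [star_trivial, dotProduct_crossGram_mulVec_self hφ]
    exact integral_nonneg fun τ => sq_nonneg _

lemma posSemidef_crossGram_sub_transpose_mul_inv_mul [Fintype ι] [Fintype κ] [DecidableEq ι]
    {φ : α → ι → ℝ} {χ : α → κ → ℝ}
    (hφ : ∀ i, MemLp (fun τ => φ τ i) 2 μ) (hχ : ∀ k, MemLp (fun τ => χ τ k) 2 μ)
    (hG : (crossGram μ φ φ).PosDef) :
    (crossGram μ χ χ -
      (crossGram μ φ χ)ᵀ * (crossGram μ φ φ)⁻¹ * crossGram μ φ χ).PosSemidef := by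
  have hblock := posSemidef_crossGram_self (μ := μ) (φ := fun τ => Sum.elim (φ τ) (χ τ))
    (Sum.rec hφ hχ)
  rw [crossGram_sumElim, ← crossGram_transpose φ χ, ← conjTranspose_eq_transpose_of_trivial]
    at hblock
  have := hG.isUnit.invertible
  simpa only [conjTranspose_eq_transpose_of_trivial] using (hG.fromBlocks₁₁ _ _).mp hblock

lemma trace_transpose_mul_le_integral_dotProduct_mulVec [Fintype ι] [Fintype κ] [DecidableEq ι]
    {φ : α → ι → ℝ} {χ : α → κ → ℝ}
    (hφ : ∀ i, MemLp (fun τ => φ τ i) 2 μ) (hχ : ∀ k, MemLp (fun τ => χ τ k) 2 μ)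
    (hG : (crossGram μ φ φ).PosDef) {X : Matrix κ κ ℝ} (hX : X.PosSemidef) :
    (Xᵀ * ((crossGram μ φ χ)ᵀ * (crossGram μ φ φ)⁻¹ * crossGram μ φ χ)).trace ≤
      ∫ τ, χ τ ⬝ᵥ (X *ᵥ χ τ) ∂μ := by
  have h := hX.transpose.trace_mul_nonneg_s6
    (posSemidef_crossGram_sub_transpose_mul_inv_mul hφ hχ hG)
  rw [Matrix.mul_sub, trace_sub, sub_nonneg] at h
  rwa [integral_dotProduct_mulVec_s6 hχ]

end MeasureTheory

theorem stmt6_general (lam ℓ n : ℕ) (I : Set ℝ)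
    (g : ℝ → Fin lam → ℝ) (f : ℝ → Fin ℓ → ℝ)
    (hg : ∀ i, MemLp (fun τ => g τ i) 2 (volume.restrict I))
    (hf : ∀ i, MemLp (fun τ => f τ i) 2 (volume.restrict I))
    (hstack : (Matrix.of fun i j =>
        ∫ τ in I, Sum.elim (g τ) (f τ) i * Sum.elim (g τ) (f τ) j :
        Matrix (Fin lam ⊕ Fin ℓ) (Fin lam ⊕ Fin ℓ) ℝ).PosDef)
    (F : Matrix (Fin ℓ) (Fin ℓ) ℝ)
    (hFdef : F = Matrix.of fun i j => ∫ τ in I, f τ i * f τ j)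
    (A : Matrix (Fin lam) (Fin ℓ) ℝ)
    (hA : A = (Matrix.of fun i j => ∫ τ in I, g τ i * f τ j) * F⁻¹)
    (e : ℝ → Fin lam → ℝ)
    (he : ∀ τ i, e τ i = g τ i - ∑ j, A i j * f τ j)
    (E : Matrix (Fin lam) (Fin lam) ℝ)
    (hEdef : E = Matrix.of fun i j => ∫ τ in I, e τ i * e τ j)
    (X : Matrix (Fin n) (Fin n) ℝ) (hX : X.PosSemidef)
    (x : ℝ → Fin n → ℝ)
    (hx : ∀ k, MemLp (fun τ => x τ k) 2 (volume.restrict I))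
    (v₁ : Fin ℓ × Fin n → ℝ) (hv₁ : v₁ = fun p => ∫ τ in I, f τ p.1 * x τ p.2)
    (v₂ : Fin lam × Fin n → ℝ) (hv₂ : v₂ = fun p => ∫ τ in I, e τ p.1 * x τ p.2) :
    E.PosDef ∧
      (∫ τ in I, (x τ) ⬝ᵥ (X.mulVec (x τ)))
        ≥ v₁ ⬝ᵥ ((F⁻¹ ⊗ₖ X).mulVec v₁) + v₂ ⬝ᵥ ((E⁻¹ ⊗ₖ X).mulVec v₂) := by
  set μ := volume.restrict I
  have he' : e = fun τ => g τ - A *ᵥ f τ := funext fun τ => funext (he τ)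
  have he2 : ∀ i, MemLp (fun τ => e τ i) 2 μ := he' ▸ fun i => (hg i).sub (memLp_mulVec hf A i)
  have hF : crossGram μ f f = F := hFdef.symm
  have hE : crossGram μ e e = E := hEdef.symm
  have hFpos : F.PosDef := hF ▸ hstack.submatrix Sum.inr_injective
  have horth : crossGram μ e f = 0 := by
    rw [he', crossGram_sub_left hg (memLp_mulVec hf A) hf, crossGram_mulVec_left hf hf, hF, hA,
      Matrix.mul_assoc, nonsing_inv_mul F ((isUnit_iff_isUnit_det F).mp hFpos.isUnit),
      Matrix.mul_one, crossGram, sub_self]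
  set T : Matrix (Fin lam ⊕ Fin ℓ) (Fin lam ⊕ Fin ℓ) ℝ := fromBlocks 1 (-A) 0 1
  have hT : (fun τ => Sum.elim (e τ) (f τ)) = fun τ => T *ᵥ Sum.elim (g τ) (f τ) := by
    ext τ (i | j) <;> simp [T, he', fromBlocks_mulVec, sub_eq_add_neg, neg_mulVec]
  have hD : (crossGram μ (fun τ => Sum.elim (e τ) (f τ)) fun τ => Sum.elim (e τ) (f τ)).PosDef := by
    rw [hT, crossGram_mulVec_mulVec (Sum.rec hg hf) (Sum.rec hg hf)]
    exact hstack.mul_mul_conjTranspose_same (vecMul_injective_iff_isUnit.mpr (by simp [T]))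
  have hEpos : E.PosDef := hE ▸ hD.submatrix Sum.inl_injective
  refine ⟨hEpos, ?_⟩
  have hbessel := trace_transpose_mul_le_integral_dotProduct_mulVec (Sum.rec he2 hf) hx hD hX
  rw [crossGram_sumElim, ← crossGram_transpose e f, horth, hF, hE, transpose_zero,
    crossGram_sumElim_left,
    transpose_fromRows_mul_inv_fromBlocks_mul_fromRows hEpos.isUnit hFpos.isUnit,
    Matrix.mul_add, trace_add] at hbessel
  have hv₁' : v₁ = vec (crossGram μ f x)ᵀ := hv₁
  have hv₂' : v₂ = vec (crossGram μ e x)ᵀ := hv₂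
  rw [hv₁', hv₂', vec_dotProduct_kronecker_mulVec_vec, vec_dotProduct_kronecker_mulVec_vec,
    transpose_transpose, transpose_transpose]
  linarith

/-- Refined Bessel-type integral inequality with the approximation-error direction:
`E ≻ 0` and `∫ xᵀ X x ≥ v₁ᵀ (F⁻¹ ⊗ X) v₁ + v₂ᵀ (E⁻¹ ⊗ X) v₂`. -/
theorem stmt6 (lam ℓ n : ℕ) (I : Set ℝ) (hI : MeasurableSet I)
    (h0 : 0 < volume I) (hfin : volume I < ⊤)
    (g : ℝ → Fin lam → ℝ) (f : ℝ → Fin ℓ → ℝ)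
    (hg : ∀ i, MemLp (fun τ => g τ i) 2 (volume.restrict I))
    (hf : ∀ i, MemLp (fun τ => f τ i) 2 (volume.restrict I))
    (hstack : (Matrix.of fun i j =>
        ∫ τ in I, Sum.elim (g τ) (f τ) i * Sum.elim (g τ) (f τ) j :
        Matrix (Fin lam ⊕ Fin ℓ) (Fin lam ⊕ Fin ℓ) ℝ).PosDef)
    (F : Matrix (Fin ℓ) (Fin ℓ) ℝ)
    (hFdef : F = Matrix.of fun i j => ∫ τ in I, f τ i * f τ j)
    (A : Matrix (Fin lam) (Fin ℓ) ℝ)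
    (hA : A = (Matrix.of fun i j => ∫ τ in I, g τ i * f τ j) * F⁻¹)
    (e : ℝ → Fin lam → ℝ)
    (he : ∀ τ i, e τ i = g τ i - ∑ j, A i j * f τ j)
    (E : Matrix (Fin lam) (Fin lam) ℝ)
    (hEdef : E = Matrix.of fun i j => ∫ τ in I, e τ i * e τ j)
    (X : Matrix (Fin n) (Fin n) ℝ) (hX : X.PosSemidef)
    (x : ℝ → Fin n → ℝ)
    (hx : ∀ k, MemLp (fun τ => x τ k) 2 (volume.restrict I))
    (v₁ : Fin ℓ × Fin n → ℝ) (hv₁ : v₁ = fun p => ∫ τ in I, f τ p.1 * x τ p.2)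
    (v₂ : Fin lam × Fin n → ℝ) (hv₂ : v₂ = fun p => ∫ τ in I, e τ p.1 * x τ p.2) :
    E.PosDef ∧
      (∫ τ in I, (x τ) ⬝ᵥ (X.mulVec (x τ)))
        ≥ v₁ ⬝ᵥ ((F⁻¹ ⊗ₖ X).mulVec v₁) + v₂ ⬝ᵥ ((E⁻¹ ⊗ₖ X).mulVec v₂) :=
  stmt6_general lam ℓ n I g f hg hf hstack F hFdef A hA e he E hEdef X hX x hx v₁ hv₁ v₂ hv₂
end

section
/- (Projection Lemma) Given n, p, q ∈ ℕ, a symmetric matrix Π ∈ ℝ^{n×n}, and matrices P ∈ ℝ^{q×n}, Q ∈ ℝ^{p×n}, there exists Θ ∈ ℝ^{p×q} such that Π + Pᵀ Θᵀ Q + Qᵀ Θ P ≺ 0 if and only if P⊥ᵀ Π P⊥ ≺ 0 and Q⊥ᵀ Π Q⊥ ≺ 0, where the columns of P⊥ and Q⊥ form bases of the null spaces of P and Q respectively. -/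
/-!
Write `π` for the form of `Π`, `A = ker P` and `B = ker Q`. A bilinear form `c` can be written as
`c x y = (Q x) ⬝ᵥ Θ (P y)` exactly when it vanishes on `B × V` and on `V × A`, and then
`x ⬝ᵥ (Π + PᵀΘᵀQ + QᵀΘP) x = π x x + 2 c x x`; so one needs such a `c` with `π + c + cᵀ`
negative definite.

With `C = A ∩ B` and `B' = B ∩ C^⊥` (orthogonal for `π`, which is definite on `C`), every vector
of `A + B` is uniquely `a + b'` with `a ∈ A`, `b' ∈ B'`, and `c = -π(p_A ·, p_B' ·)` cancels the
cross term, leaving `π a a + π b' b' < 0`. It vanishes on `B` because `p_A` maps `B = C ⊕ B'` onto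
`C`, which is `π`-orthogonal to `B'`. Finally `-μ |L x|²` with `ker L = A + B` is also admissible,
and Finsler's lemma (compactness of the unit sphere) makes `π + c + cᵀ - μ |L ·|²` negative
definite on the whole space for `μ` large.
-/

open Matrix
open LinearMap (BilinForm)

namespace LinearMap

variable {K V W V' W' M : Type*} [Field K] [AddCommGroup V] [Module K V] [AddCommGroup W]
  [Module K W] [AddCommGroup V'] [Module K V'] [AddCommGroup W'] [Module K W'] [AddCommGroup M]
  [Module K M]

theorem exists_comp_comp_eq_self (f : V →ₗ[K] W) : ∃ r : W →ₗ[K] V, f ∘ₗ r ∘ₗ f = f := by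
  obtain ⟨s, hs⟩ := f.rangeRestrict.exists_rightInverse_of_surjective f.range_rangeRestrict
  obtain ⟨r, hr⟩ := LinearMap.exists_extend s
  refine ⟨r, LinearMap.ext fun x => ?_⟩
  have hrs : r (f x) = s (f.rangeRestrict x) := LinearMap.congr_fun hr (f.rangeRestrict x)
  have hsf : f.rangeRestrict (s (f.rangeRestrict x)) = f.rangeRestrict x :=
    LinearMap.congr_fun hs _
  simpa [hrs] using congrArg Subtype.val hsf

theorem exists_compl₁₂_eq (c : V →ₗ[K] V' →ₗ[K] M) (f : V →ₗ[K] W) (g : V' →ₗ[K] W')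
    (hf : ∀ x, f x = 0 → ∀ y, c x y = 0) (hg : ∀ y, g y = 0 → ∀ x, c x y = 0) :
    ∃ γ : W →ₗ[K] W' →ₗ[K] M, γ.compl₁₂ f g = c := by
  obtain ⟨r, hr⟩ := f.exists_comp_comp_eq_self
  obtain ⟨s, hs⟩ := g.exists_comp_comp_eq_self
  refine ⟨c.compl₁₂ r s, LinearMap.ext₂ fun x y => ?_⟩
  have hx : f (r (f x) - x) = 0 := by
    rw [map_sub, sub_eq_zero]; exact LinearMap.congr_fun hr x
  have hy : g (s (g y) - y) = 0 := by
    rw [map_sub, sub_eq_zero]; exact LinearMap.congr_fun hs y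
  calc c (r (f x)) (s (g y)) = c (r (f x) - x + x) (s (g y) - y + y) := by simp
    _ = c x y := by
      rw [map_add (c (r (f x) - x + x)), hg _ hy, zero_add, map_add, add_apply, hf _ hx, zero_add]

end LinearMap

namespace LinearMap.BilinForm

section NegDefOn

variable {V : Type*} [AddCommGroup V] [Module ℝ V] {π : BilinForm ℝ V}

def NegDefOn (π : BilinForm ℝ V) (S : Set V) : Prop :=
  ∀ x ∈ S, x ≠ 0 → π x x < 0

theorem NegDefOn.mono {S T : Set V} (h : π.NegDefOn T) (hST : S ⊆ T) : π.NegDefOn S :=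
  fun x hx => h x (hST hx)

theorem NegDefOn.nonpos {S : Set V} (h : π.NegDefOn S) {x : V} (hx : x ∈ S) : π x x ≤ 0 := by
  rcases eq_or_ne x 0 with rfl | hx0
  · simp
  · exact (h x hx hx0).le

theorem NegDefOn.apply_self_add_apply_self_neg {S T : Set V} (hS : π.NegDefOn S)
    (hT : π.NegDefOn T) {a b : V} (ha : a ∈ S) (hb : b ∈ T) (hab : a + b ≠ 0) :
    π a a + π b b < 0 := by
  rcases eq_or_ne a 0 with rfl | ha0
  · simpa using hT b hb (by simpa using hab)
  · linarith [hS a ha ha0, hT.nonpos hb]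

theorem NegDefOn.disjoint_orthogonal {W : Submodule ℝ V} (h : π.NegDefOn W) :
    Disjoint W (π.orthogonal W) :=
  Submodule.disjoint_def.2 fun x hxW hxO => by
    by_contra hx0
    exact (h x hxW hx0).ne (mem_orthogonal_iff.1 hxO x hxW)

theorem NegDefOn.sup_inf_orthogonal [FiniteDimensional ℝ V] (hπ : π.IsSymm)
    {W B : Submodule ℝ V} (h : π.NegDefOn W) (hWB : W ≤ B) :
    W ⊔ B ⊓ π.orthogonal W = B := by
  have hcompl := (isCompl_orthogonal_iff_disjoint hπ.isRefl).2 h.disjoint_orthogonal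
  rw [inf_comm, ← sup_inf_assoc_of_le _ hWB, hcompl.sup_eq_top, top_inf_eq]

theorem add_add_flip_apply_self (π c : BilinForm ℝ V) (x : V) :
    (π + c + c.flip) x x = π x x + 2 * c x x := by
  simp only [add_apply, flip_apply]; ring

end NegDefOn

section Finsler

variable {E : Type*} [NormedAddCommGroup E] [NormedSpace ℝ E]

theorem apply_smul_smul_self (F : BilinForm ℝ E) (t : ℝ) (x : E) :
    F (t • x) (t • x) = t ^ 2 * F x x := by
  simp only [map_smul, smul_apply, smul_eq_mul]; ring

theorem NegDefOn.univ_of_sphere {F : BilinForm ℝ E} (hF : F.NegDefOn (Metric.sphere 0 1)) :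
    F.NegDefOn Set.univ := fun x _ hx => by
  have hu : ‖x‖⁻¹ • x ∈ Metric.sphere (0 : E) 1 := by
    simpa using norm_smul_inv_norm (𝕜 := ℝ) hx
  have hxu : x = ‖x‖ • (‖x‖⁻¹ • x) := by
    rw [smul_smul, mul_inv_cancel₀ (norm_ne_zero_iff.2 hx), one_smul]
  rw [hxu, F.apply_smul_smul_self]
  exact mul_neg_of_pos_of_neg (by positivity) (hF _ hu (ne_zero_of_mem_unit_sphere ⟨_, hu⟩))

/-- Finsler's lemma. -/
theorem exists_negDefOn_univ_sub_smul [FiniteDimensional ℝ E] {q r : BilinForm ℝ E}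
    (hr : ∀ x, 0 ≤ r x x) (hq : q.NegDefOn {x | r x x = 0}) :
    ∃ μ : ℝ, (q - μ • r).NegDefOn Set.univ := by
  have hcont : ∀ F : BilinForm ℝ E, Continuous fun x => F x x := fun F =>
    F.toContinuousBilinearMap.continuous₂.comp (continuous_id.prodMk continuous_id)
  set U : ℕ → Set E := fun μ => {x | q x x - μ * r x x < 0}
  have hopen (μ : ℕ) : IsOpen (U μ) :=
    isOpen_lt ((hcont q).sub (continuous_const.mul (hcont r))) continuous_const
  have hmono : Monotone U := fun μ ν hμν x (hx : q x x - μ * r x x < 0) => by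
    show q x x - ν * r x x < 0
    nlinarith [hr x, (Nat.cast_le (α := ℝ)).2 hμν]
  have hcover : Metric.sphere (0 : E) 1 ⊆ ⋃ μ, U μ := fun x hx => by
    have hx0 : x ≠ 0 := ne_zero_of_mem_unit_sphere ⟨x, hx⟩
    rcases (hr x).eq_or_lt with hrx | hrx
    · exact Set.mem_iUnion.2 ⟨0, by simpa [U] using hq x hrx.symm hx0⟩
    · obtain ⟨μ, hμ⟩ := exists_nat_gt (q x x / r x x)
      refine Set.mem_iUnion.2 ⟨μ, ?_⟩
      show q x x - μ * r x x < 0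
      rw [div_lt_iff₀ hrx] at hμ
      linarith
  obtain ⟨μ, hμ⟩ := (isCompact_sphere (0 : E) 1).elim_directed_cover U hopen hcover
    hmono.directed_le
  exact ⟨μ, NegDefOn.univ_of_sphere fun u hu _ => by simpa [U] using hμ hu⟩

end Finsler

theorem exists_add_add_flip_negDefOn_sup {V : Type*} [AddCommGroup V] [Module ℝ V]
    [FiniteDimensional ℝ V] {π : BilinForm ℝ V} (hπ : π.IsSymm) {A B : Submodule ℝ V}
    (hA : π.NegDefOn A) (hB : π.NegDefOn B) :
    ∃ c : BilinForm ℝ V, (∀ x ∈ B, ∀ y, c x y = 0) ∧ (∀ x, ∀ y ∈ A, c x y = 0) ∧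
      (π + c + c.flip).NegDefOn ↑(A ⊔ B) := by
  set C := A ⊓ B
  set B' := B ⊓ π.orthogonal C
  have hC : π.NegDefOn C := hA.mono (SetLike.coe_subset_coe.2 inf_le_left)
  have hCB' : C ⊔ B' = B := hC.sup_inf_orthogonal hπ inf_le_right
  have hdisj : Disjoint A B' := Submodule.disjoint_def.2 fun x hxA hxB' =>
    Submodule.disjoint_def.1 hC.disjoint_orthogonal x ⟨hxA, hxB'.1⟩ hxB'.2
  have hsup : A ⊔ B' = A ⊔ B := by
    rw [← hCB', ← sup_assoc, sup_eq_left.2 (inf_le_left : C ≤ A)]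
  obtain ⟨D, hD⟩ := Submodule.exists_isCompl (A ⊔ B')
  have hAc : IsCompl A (B' ⊔ D) := hdisj.isCompl_sup_right_of_isCompl_sup_left hD
  have hBc : IsCompl B' (A ⊔ D) :=
    hdisj.symm.isCompl_sup_right_of_isCompl_sup_left (sup_comm A B' ▸ hD)
  set pA := A.projection (B' ⊔ D) hAc
  set pB := B'.projection (A ⊔ D) hBc
  have hpA : ∀ a ∈ A, ∀ b ∈ B', pA (a + b) = a := fun a ha b hb => by
    rw [map_add, Submodule.projection_apply_of_mem_left hAc ha,
      Submodule.projection_apply_of_mem_right hAc (Submodule.mem_sup_left hb), add_zero]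
  have hpB : ∀ a ∈ A, ∀ b ∈ B', pB (a + b) = b := fun a ha b hb => by
    rw [map_add, Submodule.projection_apply_of_mem_left hBc hb,
      Submodule.projection_apply_of_mem_right hBc (Submodule.mem_sup_left ha), zero_add]
  refine ⟨-π.compl₁₂ pA pB, ?_, ?_, ?_⟩
  · intro x hx y
    obtain ⟨c, hc, b, hb, rfl⟩ := Submodule.mem_sup.1 (hCB'.symm ▸ hx : x ∈ C ⊔ B')
    have hortho : π c (pB y) = 0 :=
      mem_orthogonal_iff.1 (Submodule.mem_inf.1 (Submodule.projection_apply_mem hBc y)).2 c hc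
    rw [neg_apply, compl₁₂_apply, hpA c hc.1 b hb, hortho, neg_zero]
  · intro x y hy
    simp [pB, Submodule.projection_apply_of_mem_right hBc (Submodule.mem_sup_left hy)]
  · intro x hx hx0
    obtain ⟨a, ha, b, hb, rfl⟩ := Submodule.mem_sup.1 (hsup.symm ▸ hx : x ∈ A ⊔ B')
    have hexp : π (a + b) (a + b) + 2 * -π (pA (a + b)) (pB (a + b)) = π a a + π b b := by
      rw [hpA a ha b hb, hpB a ha b hb]
      simp only [map_add, LinearMap.add_apply, hπ.eq b a]
      ring
    rw [add_add_flip_apply_self, neg_apply, compl₁₂_apply, hexp]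
    exact hA.apply_self_add_apply_self_neg (hB.mono (SetLike.coe_subset_coe.2 inf_le_left))
      ha hb hx0

theorem exists_add_add_flip_negDefOn_univ {ι : Type*} [Fintype ι] {π : BilinForm ℝ (ι → ℝ)}
    (hπ : π.IsSymm) {A B : Submodule ℝ (ι → ℝ)} (hA : π.NegDefOn A) (hB : π.NegDefOn B) :
    ∃ c : BilinForm ℝ (ι → ℝ), (∀ x ∈ B, ∀ y, c x y = 0) ∧ (∀ x, ∀ y ∈ A, c x y = 0) ∧
      (π + c + c.flip).NegDefOn Set.univ := by
  obtain ⟨c₀, hc₀B, hc₀A, hc₀⟩ := exists_add_add_flip_negDefOn_sup hπ hA hB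
  obtain ⟨D, hD⟩ := (A ⊔ B).exists_isCompl
  set L := D.projection (A ⊔ B) hD.symm
  have hL : ∀ x, L x = 0 ↔ x ∈ A ⊔ B := fun x => Submodule.projection_apply_eq_zero_iff hD.symm
  set r : BilinForm ℝ (ι → ℝ) := (dotProductBilin ℝ ℝ).compl₁₂ L L
  have hr : ∀ x y, r x y = L x ⬝ᵥ L y := fun x y => rfl
  obtain ⟨μ, hμ⟩ := exists_negDefOn_univ_sub_smul (q := π + c₀ + c₀.flip) (r := r)
    (fun x => Finset.sum_nonneg fun i _ => mul_self_nonneg (L x i))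
    (fun x hrx => hc₀ x ((hL x).1 (dotProduct_self_eq_zero.1 hrx)))
  refine ⟨c₀ - (μ / 2) • r, fun x hx y => ?_, fun x y hy => ?_, fun x _ hx => ?_⟩
  · have hLx : L x = 0 := (hL x).2 (Submodule.mem_sup_right hx)
    simp [hc₀B x hx y, hr, hLx]
  · have hLy : L y = 0 := (hL y).2 (Submodule.mem_sup_left hy)
    simp [hc₀A x y hy, hr, hLy]
  · have hneg := hμ x trivial hx
    simp only [LinearMap.sub_apply, LinearMap.smul_apply, smul_eq_mul,
      add_add_flip_apply_self] at hneg ⊢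
    linarith

end LinearMap.BilinForm

theorem Matrix.dotProduct_add_transpose_mul_mulVec_self {R ι κ ν : Type*} [CommRing R]
    [Fintype ι] [Fintype κ] [Fintype ν] (Pi : Matrix ι ι R) (P : Matrix κ ι R)
    (Q : Matrix ν ι R) (Θ : Matrix ν κ R) (x : ι → R) :
    x ⬝ᵥ ((Pi + Pᵀ * Θᵀ * Q + Qᵀ * Θ * P) *ᵥ x) =
      x ⬝ᵥ Pi *ᵥ x + 2 * ((Q *ᵥ x) ⬝ᵥ Θ *ᵥ (P *ᵥ x)) := by
  have hPQ : x ⬝ᵥ (Pᵀ * Θᵀ * Q) *ᵥ x = (Q *ᵥ x) ⬝ᵥ Θ *ᵥ (P *ᵥ x) := by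
    rw [← mulVec_mulVec, ← mulVec_mulVec, dotProduct_mulVec x Pᵀ, vecMul_transpose,
      dotProduct_mulVec _ Θᵀ, vecMul_transpose, dotProduct_comm]
  have hQP : x ⬝ᵥ (Qᵀ * Θ * P) *ᵥ x = (Q *ᵥ x) ⬝ᵥ Θ *ᵥ (P *ᵥ x) := by
    rw [← mulVec_mulVec, ← mulVec_mulVec, dotProduct_mulVec x Qᵀ, vecMul_transpose]
  rw [add_mulVec, add_mulVec, dotProduct_add, dotProduct_add, hPQ, hQP]
  ring

/-- Projection Lemma: there exists `Θ` with `Π + Pᵀ Θᵀ Q + Qᵀ Θ P ≺ 0` iff `Π` is negative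
definite on `ker P` and on `ker Q`. (Here `Pi` plays the role of `Π`.) -/
theorem stmt7 (n p q : ℕ) (Pi : Matrix (Fin n) (Fin n) ℝ) (hPi : Pi.IsSymm)
    (P : Matrix (Fin q) (Fin n) ℝ) (Q : Matrix (Fin p) (Fin n) ℝ) :
    (∃ Θ : Matrix (Fin p) (Fin q) ℝ,
        ∀ x : Fin n → ℝ, x ≠ 0 →
          x ⬝ᵥ ((Pi + Pᵀ * Θᵀ * Q + Qᵀ * Θ * P).mulVec x) < 0) ↔
      ((∀ x : Fin n → ℝ, x ≠ 0 → P.mulVec x = 0 → x ⬝ᵥ (Pi.mulVec x) < 0) ∧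
        (∀ x : Fin n → ℝ, x ≠ 0 → Q.mulVec x = 0 → x ⬝ᵥ (Pi.mulVec x) < 0)) := by
  have hform := dotProduct_add_transpose_mul_mulVec_self Pi P Q
  constructor
  · rintro ⟨Θ, hΘ⟩
    refine ⟨fun x hx hPx => ?_, fun x hx hQx => ?_⟩
    · simpa [hform, hPx] using hΘ x hx
    · simpa [hform, hQx] using hΘ x hx
  · rintro ⟨hP, hQ⟩
    obtain ⟨c, hcQ, hcP, hneg⟩ := LinearMap.BilinForm.exists_add_add_flip_negDefOn_univ
      ((isSymm_toBilin'_iff_isSymm).2 hPi) (A := LinearMap.ker P.mulVecLin)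
      (B := LinearMap.ker Q.mulVecLin)
      (fun x hx hx0 => by simpa [toBilin'_apply'] using hP x hx0 hx)
      (fun x hx hx0 => by simpa [toBilin'_apply'] using hQ x hx0 hx)
    obtain ⟨γ, rfl⟩ := LinearMap.exists_compl₁₂_eq c Q.mulVecLin P.mulVecLin
      (fun x hx y => hcQ x hx y) (fun y hy x => hcP x y hy)
    refine ⟨LinearMap.toMatrix₂' ℝ γ, fun x hx => ?_⟩
    have := hneg x trivial hx
    rw [LinearMap.BilinForm.add_add_flip_apply_self, toBilin'_apply'] at this
    rwa [hform, ← toLinearMap₂'_apply' (LinearMap.toMatrix₂' ℝ γ), toLinearMap₂'_toMatrix']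
end

section
/- For Z ∈ 𝕊^n with 0 ≺ Z ≺ I_n, and any G, G̃ ∈ ℝ^{n×ℓ}, N, Ñ ∈ ℝ^{n×ℓ}: Sy(Gᵀ N) ⪯ Sy(G̃ᵀ N + Gᵀ Ñ − G̃ᵀ Ñ) + (G − G̃)ᵀ Z^{-1} (G − G̃) + (N − Ñ)ᵀ (I_n − Z)^{-1} (N − Ñ), where Sy(X) = X + Xᵀ. Equality holds when G = G̃ and N = Ñ. -/
/-!
Write `A = G - G̃`, `B = N - Ñ` and `W = 1 - Z`. The gap between the two sides is
`AᵀZ⁻¹A + BᵀW⁻¹B - (AᵀB + BᵀA)`. Completing the square,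
`AᵀWA + BᵀW⁻¹B - (AᵀB + BᵀA) = (W⁻¹B - A)ᵀ W (W⁻¹B - A) ⪰ 0`,
and what remains is `Aᵀ(Z⁻¹ - W)A ⪰ 0`, because `Z⁻¹ - W = (Z - 1)ᵀ Z⁻¹ (Z - 1) + 1`.
-/

open Matrix

namespace Matrix

theorem linearization_add_add_sub_eq {m n R : Type*} [Fintype n] [Ring R] [StarRing R]
    (G G' N N' : Matrix n m R) (P Q : Matrix m m R) :
    (G'ᴴ * N + Gᴴ * N' - G'ᴴ * N') + (G'ᴴ * N + Gᴴ * N' - G'ᴴ * N')ᴴ + P + Q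
        - (Gᴴ * N + (Gᴴ * N)ᴴ)
      = P + Q - ((G - G')ᴴ * (N - N') + (N - N')ᴴ * (G - G')) := by
  simp only [conjTranspose_sub, conjTranspose_add, conjTranspose_mul, conjTranspose_conjTranspose,
    Matrix.sub_mul, Matrix.mul_sub]
  abel

variable {m n K : Type*} [Fintype n] [DecidableEq n] [Fintype m]
  [Field K] [PartialOrder K] [StarRing K]

theorem PosDef.posSemidef_add_inv_sub_two {Z : Matrix n n K} (hZ : Z.PosDef) :
    (Z + Z⁻¹ - 2).PosSemidef := by
  have hdet : IsUnit Z.det := (isUnit_iff_isUnit_det Z).mp hZ.isUnit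
  have hsq : Z + Z⁻¹ - 2 = (Z - 1)ᴴ * Z⁻¹ * (Z - 1) := by
    simp only [conjTranspose_sub, hZ.isHermitian.eq, conjTranspose_one, Matrix.sub_mul,
      Matrix.mul_sub, Matrix.one_mul, Matrix.mul_one, mul_nonsing_inv _ hdet,
      nonsing_inv_mul _ hdet, ← one_add_one_eq_two]
    abel
  rw [hsq]
  exact hZ.inv.posSemidef.conjTranspose_mul_mul_same _

theorem PosDef.posSemidef_conjTranspose_mul_mul_add_sub {W : Matrix n n K} (hW : W.PosDef)
    (A B : Matrix n m K) :
    (Aᴴ * W * A + Bᴴ * W⁻¹ * B - (Aᴴ * B + Bᴴ * A)).PosSemidef := by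
  have hdet : IsUnit W.det := (isUnit_iff_isUnit_det W).mp hW.isUnit
  have hsq : Aᴴ * W * A + Bᴴ * W⁻¹ * B - (Aᴴ * B + Bᴴ * A)
      = (W⁻¹ * B - A)ᴴ * W * (W⁻¹ * B - A) := by
    simp only [conjTranspose_sub, conjTranspose_mul, hW.isHermitian.inv.eq, Matrix.sub_mul,
      Matrix.mul_sub, Matrix.mul_assoc, mul_nonsing_inv_cancel_left _ _ hdet,
      nonsing_inv_mul_cancel_left _ _ hdet]
    abel
  rw [hsq]
  exact hW.posSemidef.conjTranspose_mul_mul_same _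

theorem PosDef.posSemidef_conjTranspose_mul_inv_mul_add_sub [StarOrderedRing K]
    {Z : Matrix n n K} (hZ : Z.PosDef) (hZI : (1 - Z).PosDef) (A B : Matrix n m K) :
    (Aᴴ * Z⁻¹ * A + Bᴴ * (1 - Z)⁻¹ * B - (Aᴴ * B + Bᴴ * A)).PosSemidef := by
  have hdecomp : Aᴴ * Z⁻¹ * A + Bᴴ * (1 - Z)⁻¹ * B - (Aᴴ * B + Bᴴ * A)
      = Aᴴ * (Z + Z⁻¹ - 2) * A + Aᴴ * A
        + (Aᴴ * (1 - Z) * A + Bᴴ * (1 - Z)⁻¹ * B - (Aᴴ * B + Bᴴ * A)) := by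
    simp only [← one_add_one_eq_two, Matrix.sub_mul, Matrix.mul_sub, Matrix.add_mul,
      Matrix.mul_add, Matrix.mul_one]
    abel
  rw [hdecomp]
  exact ((hZ.posSemidef_add_inv_sub_two.conjTranspose_mul_mul_same A).add
    (posSemidef_conjTranspose_mul_self A)).add (hZI.posSemidef_conjTranspose_mul_mul_add_sub A B)

end Matrix

/-- psd-convex overestimate of the bilinear form `Sy(GᵀN)`:
`Sy(GᵀN) ⪯ Sy(G̃ᵀN + GᵀÑ − G̃ᵀÑ) + (G−G̃)ᵀZ⁻¹(G−G̃) + (N−Ñ)ᵀ(I−Z)⁻¹(N−Ñ)`, with equality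
when `G = G̃` and `N = Ñ`. -/
theorem stmt11 (n ℓ : ℕ) (Z : Matrix (Fin n) (Fin n) ℝ)
    (hZ : Z.PosDef) (hZI : ((1 : Matrix (Fin n) (Fin n) ℝ) - Z).PosDef)
    (G G' N N' : Matrix (Fin n) (Fin ℓ) ℝ) :
    (((G'ᵀ * N + Gᵀ * N' - G'ᵀ * N') + (G'ᵀ * N + Gᵀ * N' - G'ᵀ * N')ᵀ
        + (G - G')ᵀ * Z⁻¹ * (G - G')
        + (N - N')ᵀ * ((1 : Matrix (Fin n) (Fin n) ℝ) - Z)⁻¹ * (N - N'))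
      - (Gᵀ * N + (Gᵀ * N)ᵀ)).PosSemidef ∧
    (G = G' → N = N' →
      (G'ᵀ * N + Gᵀ * N' - G'ᵀ * N') + (G'ᵀ * N + Gᵀ * N' - G'ᵀ * N')ᵀ
          + (G - G')ᵀ * Z⁻¹ * (G - G')
          + (N - N')ᵀ * ((1 : Matrix (Fin n) (Fin n) ℝ) - Z)⁻¹ * (N - N')
        = Gᵀ * N + (Gᵀ * N)ᵀ) := by
  refine ⟨?_, fun hG hN => by subst hG hN; simp⟩
  simp only [← conjTranspose_eq_transpose_of_trivial]
  rw [linearization_add_add_sub_eq]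
  exact hZ.posSemidef_conjTranspose_mul_inv_mul_add_sub hZI (G - G') (N - N')
end

section
/- Let f_i : I_i → ℝ^{d_i} be square-integrable functions on disjoint intervals I_i = [−r_i, −r_{i−1}], i = 1,…,ν, each with Gram matrix 𝔉_i = ∫_{I_i} f_i f_iᵀ dτ positive definite, let Q_i ∈ 𝕊^n be positive semidefinite, and let e : [−r_ν, 0] → ℝ^n be square-integrable. Then Σ_{i=1}^ν ∫_{I_i} e(τ)ᵀ Q_i e(τ) dτ ≥ ξᵀ diag(I_{d_1} ⊗ Q_1, …, I_{d_ν} ⊗ Q_ν) ξ, where ξ is the stacked vector with blocks ξ_i = ∫_{I_i} (√(𝔉_i^{-1}) f_i(τ) ⊗ I_n) e(τ) dτ. -/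
/-!
On each interval the components of `f i` are vectors of `L²(I_i)` with Gram matrix `F i`, so the
whitened family `√(F i⁻¹) f i` is orthonormal, and the blocks of `ξ` are the inner products of its
members with the components of `e`. Writing `Q i = C²` with `C` symmetric, the quadratic form of a
block is a sum of squared inner products of the orthonormal family with the components of `C e`,
which Bessel's inequality bounds by `∫ ‖C e‖² = ∫ eᵀ (Q i) e`.
-/

open Matrix MeasureTheory
open scoped Kronecker

section OldSqrt
open scoped ComplexOrder

/-- The square root of a positive semidefinite matrix, as Mathlib defined it in Dec 2024. -/
noncomputable def Matrix.PosSemidef.sqrt {n 𝕜 : Type*} [Fintype n] [DecidableEq n] [RCLike 𝕜]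
    {A : Matrix n n 𝕜} (hA : A.PosSemidef) : Matrix n n 𝕜 :=
  hA.1.eigenvectorUnitary.1 * diagonal ((↑) ∘ (√·) ∘ hA.1.eigenvalues) *
    (star hA.1.eigenvectorUnitary : Matrix n n 𝕜)

end OldSqrt

open scoped InnerProductSpace

namespace Matrix.PosSemidef

section RCLike
open scoped ComplexOrder

variable {n 𝕜 : Type*} [Fintype n] [DecidableEq n] [RCLike 𝕜] {A : Matrix n n 𝕜}

lemma posSemidef_sqrt (hA : A.PosSemidef) : hA.sqrt.PosSemidef :=
  (posSemidef_diagonal_iff.mpr fun i => by simp [RCLike.ofReal_nonneg, Real.sqrt_nonneg]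
    ).mul_mul_conjTranspose_same (hA.1.eigenvectorUnitary : Matrix n n 𝕜)

lemma sqrt_mul_self (hA : A.PosSemidef) : hA.sqrt * hA.sqrt = A := by
  set U : Matrix n n 𝕜 := hA.1.eigenvectorUnitary.1
  set D : Matrix n n 𝕜 := diagonal ((↑) ∘ (√·) ∘ hA.1.eigenvalues)
  have hUU : star U * U = 1 := by simp [U]
  have hDD : D * D = diagonal ((↑) ∘ hA.1.eigenvalues) := by
    simp only [D, diagonal_mul_diagonal, Function.comp_apply, ← RCLike.ofReal_mul,
      Real.mul_self_sqrt (hA.eigenvalues_nonneg _)]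
    rfl
  calc U * D * star U * (U * D * star U) = U * (D * (star U * U) * D) * star U := by
        simp only [Matrix.mul_assoc]
    _ = A := by
        rw [hUU, Matrix.mul_one, hDD]
        conv_rhs => rw [hA.1.spectral_theorem, Unitary.conjStarAlgAut_apply]

end RCLike

lemma transpose_sqrt {n : Type*} [Fintype n] [DecidableEq n] {A : Matrix n n ℝ}
    (hA : A.PosSemidef) : hA.sqrtᵀ = hA.sqrt := by
  simpa using hA.posSemidef_sqrt.1.eq

lemma dotProduct_mulVec_eq_sum_sq {n : Type*} [Fintype n] [DecidableEq n]
    {Q : Matrix n n ℝ} (hQ : Q.PosSemidef) (v : n → ℝ) :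
    v ⬝ᵥ Q *ᵥ v = ∑ m, (hQ.sqrt *ᵥ v) m ^ 2 := by
  conv_lhs => rw [← hQ.sqrt_mul_self, ← mulVec_mulVec, dotProduct_mulVec, ← mulVec_transpose,
    hQ.transpose_sqrt]
  simp [dotProduct, sq]

end Matrix.PosSemidef

lemma Matrix.mul_mul_eq_one_of_mul_self_eq_inv {n K : Type*} [Fintype n] [DecidableEq n]
    [CommRing K] {S F : Matrix n n K} (hS : S * S = F⁻¹) (hF : IsUnit F.det) :
    S * F * S = 1 :=
  mul_eq_one_comm.mp (by rw [← Matrix.mul_assoc, hS, nonsing_inv_mul _ hF])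

lemma Matrix.gram_sum_smul {E ι κ : Type*} [SeminormedAddCommGroup E] [InnerProductSpace ℝ E]
    [Fintype κ] (A : Matrix ι κ ℝ) (v : κ → E) :
    gram ℝ (fun j => ∑ k, A j k • v k) = A * gram ℝ v * Aᵀ := by
  ext i j
  simp only [gram_apply, sum_inner, inner_sum, real_inner_smul_left, real_inner_smul_right,
    mul_apply, transpose_apply, Finset.sum_mul]
  refine Finset.sum_congr rfl fun k _ => Finset.sum_congr rfl fun l _ => by ring

lemma Matrix.PosDef.orthonormal_sum_sqrt_inv_smul {E ι : Type*} [NormedAddCommGroup E]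
    [InnerProductSpace ℝ E] [Fintype ι] [DecidableEq ι] {v : ι → E} {G : Matrix ι ι ℝ}
    (hvG : gram ℝ v = G) (hG : G.PosDef) :
    Orthonormal ℝ (fun j => ∑ k, hG.inv.posSemidef.sqrt j k • v k) := by
  rw [← gram_eq_one_iff_orthonormal, gram_sum_smul, hvG, PosSemidef.transpose_sqrt]
  exact mul_mul_eq_one_of_mul_self_eq_inv (PosSemidef.sqrt_mul_self _) hG.det_pos.ne'.isUnit

theorem Orthonormal.sum_dotProduct_mulVec_inner_le {E ι κ : Type*} [NormedAddCommGroup E]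
    [InnerProductSpace ℝ E] [Fintype ι] [Fintype κ] [DecidableEq κ] {w : ι → E}
    (hw : Orthonormal ℝ w) (x : κ → E) {Q : Matrix κ κ ℝ} (hQ : Q.PosSemidef) :
    ∑ j, (fun k => ⟪w j, x k⟫_ℝ) ⬝ᵥ Q *ᵥ (fun k => ⟪w j, x k⟫_ℝ) ≤ (Q * gram ℝ x).trace := by
  set C := hQ.sqrt
  set y : κ → E := fun m => ∑ k, C m k • x k
  calc ∑ j, (fun k => ⟪w j, x k⟫_ℝ) ⬝ᵥ Q *ᵥ (fun k => ⟪w j, x k⟫_ℝ)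
      = ∑ j, ∑ m, ⟪w j, y m⟫_ℝ ^ 2 := by
        simp only [hQ.dotProduct_mulVec_eq_sum_sq, y, inner_sum, real_inner_smul_right]
        rfl
    _ = ∑ m, ∑ j, ⟪w j, y m⟫_ℝ ^ 2 := Finset.sum_comm
    _ ≤ ∑ m, ‖y m‖ ^ 2 := Finset.sum_le_sum fun m _ => by
        simpa only [Real.norm_eq_abs, sq_abs] using hw.sum_inner_products_le (y m)
    _ = (gram ℝ y).trace := by simp [trace]
    _ = (Q * gram ℝ x).trace := by
        rw [gram_sum_smul, hQ.transpose_sqrt, trace_mul_comm, ← Matrix.mul_assoc,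
          hQ.sqrt_mul_self]

lemma MeasureTheory.MemLp.inner_toLp_toLp {α : Type*} [MeasurableSpace α] {μ : Measure α}
    {f g : α → ℝ} (hf : MemLp f 2 μ) (hg : MemLp g 2 μ) :
    ⟪hf.toLp f, hg.toLp g⟫_ℝ = ∫ x, f x * g x ∂μ := by
  rw [L2.inner_def]
  refine integral_congr_ae ?_
  filter_upwards [hf.coeFn_toLp, hg.coeFn_toLp] with x hfx hgx
  simp [hfx, hgx, mul_comm]

section L2

variable {α κ : Type*} [MeasurableSpace α] {μ : Measure α} [Fintype κ]

lemma MeasureTheory.MemLp.integral_sum_mul_mul_eq_inner {ι : Type*} [Fintype ι]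
    {f : α → ι → ℝ} (hf : ∀ j, MemLp (fun x => f x j) 2 μ) {g : α → ℝ} (hg : MemLp g 2 μ)
    (a : ι → ℝ) :
    ∫ x, (∑ j, a j * f x j) * g x ∂μ = ⟪∑ j, a j • (hf j).toLp _, hg.toLp g⟫_ℝ := by
  have hint (j : ι) : Integrable (fun x => f x j * g x) μ := (hf j).integrable_mul hg
  simp only [sum_inner, real_inner_smul_left, MemLp.inner_toLp_toLp, Finset.sum_mul, mul_assoc]
  rw [integral_finsetSum _ fun j _ => (hint j).const_mul (a j)]
  simp only [integral_const_mul]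

lemma MeasureTheory.MemLp.integral_dotProduct_mulVec_eq_trace {e : α → κ → ℝ}
    (he : ∀ k, MemLp (fun x => e x k) 2 μ) (Q : Matrix κ κ ℝ) :
    ∫ x, e x ⬝ᵥ Q *ᵥ e x ∂μ = (Q * gram ℝ fun k => (he k).toLp _).trace := by
  have hpoint : ∀ x, e x ⬝ᵥ Q *ᵥ e x = ∑ k, ∑ l, Q k l * (e x l * e x k) := fun x => by
    simp only [dotProduct, mulVec, Finset.mul_sum]
    exact Finset.sum_congr rfl fun k _ => Finset.sum_congr rfl fun l _ => by ring
  have hint (k l : κ) : Integrable (fun x => e x l * e x k) μ := (he l).integrable_mul (he k)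
  simp only [hpoint, trace, diag, mul_apply, gram_apply, MemLp.inner_toLp_toLp]
  rw [integral_finsetSum _ fun k _ =>
    integrable_finsetSum _ fun l _ => (hint k l).const_mul (Q k l)]
  refine Finset.sum_congr rfl fun k _ => ?_
  rw [integral_finsetSum _ fun l _ => (hint k l).const_mul (Q k l)]
  simp only [integral_const_mul]

theorem sum_dotProduct_mulVec_integral_le {ι : Type*} [Fintype ι] [DecidableEq ι]
    [DecidableEq κ] {f : α → ι → ℝ} (hf : ∀ j, MemLp (fun x => f x j) 2 μ)
    {F : Matrix ι ι ℝ} (hFdef : F = of fun j k => ∫ x, f x j * f x k ∂μ) (hF : F.PosDef)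
    {Q : Matrix κ κ ℝ} (hQ : Q.PosSemidef) {e : α → κ → ℝ}
    (he : ∀ k, MemLp (fun x => e x k) 2 μ) :
    ∑ j, (fun k => ∫ x, (∑ j', hF.inv.posSemidef.sqrt j j' * f x j') * e x k ∂μ) ⬝ᵥ
        Q *ᵥ (fun k => ∫ x, (∑ j', hF.inv.posSemidef.sqrt j j' * f x j') * e x k ∂μ)
      ≤ ∫ x, e x ⬝ᵥ Q *ᵥ e x ∂μ := by
  have hgram : gram ℝ (fun j => (hf j).toLp _) = F := by
    ext j k
    simp [hFdef, MemLp.inner_toLp_toLp]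
  simp only [MemLp.integral_sum_mul_mul_eq_inner hf (he _),
    MemLp.integral_dotProduct_mulVec_eq_trace he]
  exact (hF.orthonormal_sum_sqrt_inv_smul hgram).sum_dotProduct_mulVec_inner_le _ hQ

end L2

lemma Matrix.dotProduct_blockDiagonal'_mulVec {o R : Type*} {m : o → Type*} [Fintype o]
    [DecidableEq o] [∀ i, Fintype (m i)] [CommSemiring R] (M : ∀ i, Matrix (m i) (m i) R)
    (u v : (Σ i, m i) → R) :
    u ⬝ᵥ blockDiagonal' M *ᵥ v
      = ∑ i, (fun a => u ⟨i, a⟩) ⬝ᵥ M i *ᵥ (fun a => v ⟨i, a⟩) := by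
  have hmulVec (i : o) (a : m i) :
      (blockDiagonal' M *ᵥ v) ⟨i, a⟩ = (M i *ᵥ fun b => v ⟨i, b⟩) a := by
    simp only [mulVec, dotProduct, Fintype.sum_sigma]
    rw [Finset.sum_eq_single i (fun i' _ hne => Finset.sum_eq_zero fun b _ => by
      rw [blockDiagonal'_apply_ne _ _ _ (Ne.symm hne), zero_mul]) (by simp)]
    simp [blockDiagonal'_apply_eq]
  simp only [dotProduct, Fintype.sum_sigma, hmulVec]

lemma Matrix.dotProduct_one_kronecker_mulVec {l n R : Type*} [Fintype l] [DecidableEq l]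
    [Fintype n] [CommSemiring R] (Q : Matrix n n R) (u v : l × n → R) :
    u ⬝ᵥ ((1 : Matrix l l R) ⊗ₖ Q) *ᵥ v
      = ∑ j, (fun k => u (j, k)) ⬝ᵥ Q *ᵥ (fun k => v (j, k)) := by
  have hmulVec (j : l) (k : n) :
      (((1 : Matrix l l R) ⊗ₖ Q) *ᵥ v) (j, k) = (Q *ᵥ fun k' => v (j, k')) k := by
    simp [mulVec, dotProduct, Fintype.sum_prod_type, one_apply, ite_mul]
  simp only [dotProduct, Fintype.sum_prod_type, hmulVec]

theorem stmt14_general (ν n : ℕ) (d : Fin ν → ℕ) (r : Fin (ν + 1) → ℝ)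
    (f : ∀ i : Fin ν, ℝ → Fin (d i) → ℝ)
    (hf : ∀ i j, MemLp (fun τ => f i τ j) 2
      (volume.restrict (Set.Icc (-(r i.succ)) (-(r i.castSucc)))))
    (F : ∀ i, Matrix (Fin (d i)) (Fin (d i)) ℝ)
    (hFdef : ∀ i, F i = Matrix.of fun j k =>
      ∫ τ in Set.Icc (-(r i.succ)) (-(r i.castSucc)), f i τ j * f i τ k)
    (hF : ∀ i, (F i).PosDef)
    (Q : Fin ν → Matrix (Fin n) (Fin n) ℝ) (hQ : ∀ i, (Q i).PosSemidef)
    (e : ℝ → Fin n → ℝ)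
    (he : ∀ (i : Fin ν) (k : Fin n), MemLp (fun τ => e τ k) 2
      (volume.restrict (Set.Icc (-(r i.succ)) (-(r i.castSucc)))))
    (ξ : (Σ i : Fin ν, Fin (d i) × Fin n) → ℝ)
    (hξ : ∀ i j k, ξ ⟨i, (j, k)⟩ =
      ∫ τ in Set.Icc (-(r i.succ)) (-(r i.castSucc)),
        (∑ j', ((hF i).inv.posSemidef.sqrt) j j' * f i τ j') * e τ k) :
    (∑ i, ∫ τ in Set.Icc (-(r i.succ)) (-(r i.castSucc)), (e τ) ⬝ᵥ ((Q i).mulVec (e τ)))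
      ≥ ξ ⬝ᵥ ((Matrix.blockDiagonal'
          (fun i => (1 : Matrix (Fin (d i)) (Fin (d i)) ℝ) ⊗ₖ Q i)).mulVec ξ) := by
  rw [ge_iff_le, dotProduct_blockDiagonal'_mulVec]
  refine Finset.sum_le_sum fun i _ => ?_
  rw [dotProduct_one_kronecker_mulVec]
  simpa only [hξ] using sum_dotProduct_mulVec_integral_le (hf i) (hFdef i) (hF i) (hQ i) (he i)

/-- Summed Bessel-type inequality over subintervals `I_i = [−r_i, −r_{i−1}]`:
`Σᵢ ∫_{I_i} eᵀ Qᵢ e ≥ ξᵀ diag(I_{dᵢ} ⊗ Qᵢ) ξ` where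
`ξᵢ = ∫_{I_i} (√(𝔉ᵢ⁻¹) fᵢ(τ) ⊗ I_n) e(τ) dτ`. -/
theorem stmt14 (ν n : ℕ) (d : Fin ν → ℕ) (r : Fin (ν + 1) → ℝ)
    (hr0 : r 0 = 0) (hmono : StrictMono r)
    (f : ∀ i : Fin ν, ℝ → Fin (d i) → ℝ)
    (hf : ∀ i j, MemLp (fun τ => f i τ j) 2
      (volume.restrict (Set.Icc (-(r i.succ)) (-(r i.castSucc)))))
    (F : ∀ i, Matrix (Fin (d i)) (Fin (d i)) ℝ)
    (hFdef : ∀ i, F i = Matrix.of fun j k =>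
      ∫ τ in Set.Icc (-(r i.succ)) (-(r i.castSucc)), f i τ j * f i τ k)
    (hF : ∀ i, (F i).PosDef)
    (Q : Fin ν → Matrix (Fin n) (Fin n) ℝ) (hQ : ∀ i, (Q i).PosSemidef)
    (e : ℝ → Fin n → ℝ)
    (he : ∀ (i : Fin ν) (k : Fin n), MemLp (fun τ => e τ k) 2
      (volume.restrict (Set.Icc (-(r i.succ)) (-(r i.castSucc)))))
    (ξ : (Σ i : Fin ν, Fin (d i) × Fin n) → ℝ)
    (hξ : ∀ i j k, ξ ⟨i, (j, k)⟩ =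
      ∫ τ in Set.Icc (-(r i.succ)) (-(r i.castSucc)),
        (∑ j', ((hF i).inv.posSemidef.sqrt) j j' * f i τ j') * e τ k) :
    (∑ i, ∫ τ in Set.Icc (-(r i.succ)) (-(r i.castSucc)), (e τ) ⬝ᵥ ((Q i).mulVec (e τ)))
      ≥ ξ ⬝ᵥ ((Matrix.blockDiagonal'
          (fun i => (1 : Matrix (Fin (d i)) (Fin (d i)) ℝ) ⊗ₖ Q i)).mulVec ξ) :=
  stmt14_general ν n d r f hf F hFdef hF Q hQ e he ξ hξ
end
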